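/- arXiv:2103.01704 — 5 statements merged into one kernel-verified Lean document; each statement's English description precedes it below -/
import Mathlib

section
/- Suppose u, v, w are words over the alphabet {a,b} such that w has length n and w is a factor of u but not of v. Then there exist matrices A, B in UT_{n+1}(T) such that u(AB, BA) ≠ v(AB, BA), where u(AB,BA) denotes the evaluation of u under the substitution a ↦ AB, b ↦ BA. -/
/-- The tropical (max-plus) semiring `ℝ ∪ {-∞}`: `⊥` is `-∞`,
`Finset.sup` is tropical sum (max), `+` is tropical product. -/
abbrev Trop := WithBot ℝ

/-- Tropical (max-plus) matrix multiplication: `(X*Y) i j = max_k (X i k + Y k j)`. -/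
def tmul {ι : Type*} [Fintype ι] (X Y : Matrix ι ι Trop) : Matrix ι ι Trop :=
  fun i j => Finset.univ.sup fun k => X i k + Y k j

/-- The tropical identity matrix: `0` on the diagonal, `-∞` elsewhere. -/
def tId (ι : Type*) [DecidableEq ι] : Matrix ι ι Trop :=
  fun i j => if i = j then (0 : Trop) else ⊥

/-- Upper triangular tropical matrices: `-∞` below the diagonal. -/
def IsUT {n : ℕ} (X : Matrix (Fin n) (Fin n) Trop) : Prop :=
  ∀ i j : Fin n, (j : ℕ) < (i : ℕ) → X i j = ⊥

/-- Evaluation of a word over the alphabet `{a, b}` (encoded as `Bool`,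
with `a = true`, `b = false`) at matrices `X, Y` (substituting `a ↦ X`, `b ↦ Y`),
using tropical matrix multiplication. -/
def evalWord {ι : Type*} [Fintype ι] [DecidableEq ι] (w : List Bool)
    (X Y : Matrix ι ι Trop) : Matrix ι ι Trop :=
  (w.map fun c => if c then X else Y).foldr tmul (tId ι)

/-- Substitution of words into a word: `subst w x y = w[x, y]`
(replace each `a = true` by the word `x` and each `b = false` by `y`). -/
def subst (w x y : List Bool) : List Bool :=
  w.flatMap fun c => if c then x else y

namespace Stmt1Aux

noncomputable def del (w : List Bool) : ℕ → ℝ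
  | 0 => 0
  | i+1 => del w i + (if w.getD i true then -2 else 2)

noncomputable def mu (n : ℕ) (i : ℕ) : ℝ := if i = 0 ∨ i = n then 0 else -1

lemma mu_le (n i : ℕ) : mu n i ≤ 0 := by unfold mu; split <;> norm_num
lemma mu_ge (n i : ℕ) : -1 ≤ mu n i := by unfold mu; split <;> norm_num
lemma mu_zero (n : ℕ) : mu n 0 = 0 := by simp [mu]
lemma mu_last (n : ℕ) : mu n n = 0 := by simp [mu]

lemma del_true {w : List Bool} {i : ℕ} (h : w.getD i true = true) :
    del w (i+1) = del w i - 2 := by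
  rw [show del w (i+1) = del w i + (if w.getD i true then -2 else 2) from rfl, h]
  norm_num; ring
lemma del_false {w : List Bool} {i : ℕ} (h : w.getD i true = false) :
    del w (i+1) = del w i + 2 := by
  rw [show del w (i+1) = del w i + (if w.getD i true then -2 else 2) from rfl, h]; norm_num

noncomputable def matA (w : List Bool) : Matrix (Fin (w.length+1)) (Fin (w.length+1)) Trop :=
  fun i j =>
    if (j:ℕ) = (i:ℕ) then ((del w i : ℝ) : Trop)
    else if (j:ℕ) = (i:ℕ)+1 ∧ w.getD i true = true then
      ((del w ((i:ℕ)+1) - mu w.length ((i:ℕ)+1) : ℝ) : Trop)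
    else ⊥

noncomputable def matB (w : List Bool) : Matrix (Fin (w.length+1)) (Fin (w.length+1)) Trop :=
  fun i j =>
    if (j:ℕ) = (i:ℕ) then ((mu w.length i - del w i : ℝ) : Trop)
    else if (j:ℕ) = (i:ℕ)+1 ∧ w.getD i true = false then ((-del w ((i:ℕ)+1) : ℝ) : Trop)
    else ⊥

lemma coe_add_le_zero {x y : ℝ} (h : x + y ≤ 0) : (x : Trop) + (y : Trop) ≤ 0 := by
  rw [← WithBot.coe_add, ← WithBot.coe_zero]
  exact_mod_cast h

lemma add_eq_zero_split {a b : Trop} (ha : a ≤ 0) (hb : b ≤ 0) (h : a + b = 0) :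
    a = 0 ∧ b = 0 := by
  induction a using WithBot.recBotCoe with
  | bot => simp at h
  | coe x =>
    induction b using WithBot.recBotCoe with
    | bot => simp at h
    | coe y =>
      rw [← WithBot.coe_add, ← WithBot.coe_zero, WithBot.coe_inj] at h
      rw [← WithBot.coe_zero, WithBot.coe_le_coe] at ha hb
      rw [← WithBot.coe_zero, WithBot.coe_inj, WithBot.coe_inj]
      constructor <;> linarith

lemma AB_term_le (w : List Bool) (i k j : Fin (w.length+1)) :
    matA w i k + matB w k j ≤ 0 := by
  unfold matA matB
  split_ifs with h1 h2 h3 h4 h5 h6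
  all_goals try (simp only [WithBot.bot_add, WithBot.add_bot]; exact bot_le)
  · -- k=i, j=k : del i + (mu k - del k)
    apply coe_add_le_zero; rw [h1]; have := mu_le w.length (i:ℕ); linarith
  · -- k=i, j=k+1, w_k = false
    apply coe_add_le_zero
    have h7 := del_false h3.2
    rw [h1] at h7 ⊢; linarith
  · -- k=i+1 (w_i true), j=k
    apply coe_add_le_zero; rw [h4.1]; linarith
  · -- k=i+1 (w_i true), j=k+1, w_k false
    apply coe_add_le_zero
    have h7 := del_false h6.2
    rw [h4.1] at h7 ⊢
    have := mu_ge w.length ((i:ℕ)+1); linarith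

lemma BA_term_le (w : List Bool) (i k j : Fin (w.length+1)) :
    matB w i k + matA w k j ≤ 0 := by
  unfold matA matB
  split_ifs with h1 h2 h3 h4 h5 h6
  all_goals try (simp only [WithBot.bot_add, WithBot.add_bot]; exact bot_le)
  · -- k=i, j=k : (mu i - del i) + del k
    apply coe_add_le_zero; rw [h1]; have := mu_le w.length (i:ℕ); linarith
  · -- k=i, j=k+1, w_k = true : (mu i - del i) + (del (k+1) - mu (k+1))
    apply coe_add_le_zero
    have h7 := del_true h3.2
    rw [h1] at h7 ⊢
    have := mu_ge w.length ((i:ℕ)+1)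
    have := mu_le w.length (i:ℕ); linarith
  · -- k=i+1 (w_i false), j=k : -del(i+1) + del k
    apply coe_add_le_zero; rw [h4.1]; linarith
  · -- k=i+1 (w_i false), j=k+1, w_k true : -del(i+1) + (del(k+1) - mu(k+1))
    apply coe_add_le_zero
    have h7 := del_true h6.2
    rw [h4.1] at h7 ⊢
    have := mu_ge w.length ((i:ℕ)+1+1)
    linarith

end Stmt1Aux

-- chunk 2 appended to t1
namespace Stmt1Aux

lemma coe_add_eq_zero {x y : ℝ} (h : (x : Trop) + (y : Trop) = 0) : x + y = 0 := by
  rw [← WithBot.coe_add, ← WithBot.coe_zero, WithBot.coe_inj] at h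
  exact h

lemma mu_eq_zero {n i : ℕ} (h : mu n i = 0) : i = 0 ∨ i = n := by
  unfold mu at h; split at h
  · assumption
  · norm_num at h

lemma mu_of {n i : ℕ} (h : i = 0 ∨ i = n) : mu n i = 0 := by
  unfold mu; rw [if_pos h]

lemma AB_term_zero (w : List Bool) (i k j : Fin (w.length+1))
    (h : matA w i k + matB w k j = 0) :
    ((j:ℕ) = (i:ℕ) ∧ ((i:ℕ) = 0 ∨ (i:ℕ) = w.length)) ∨
      ((j:ℕ) = (i:ℕ)+1 ∧ w.getD (i:ℕ) true = true) := by
  unfold matA matB at h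
  split_ifs at h with h1 h2 h3 h4 h5 h6
  all_goals try simp only [WithBot.bot_add, WithBot.add_bot] at h
  all_goals try exact absurd h (by simp)
  · -- k=i, j=k
    have hr := coe_add_eq_zero h
    left
    refine ⟨by omega, ?_⟩
    rw [h1] at hr
    have : mu w.length (i:ℕ) = 0 := by linarith
    exact mu_eq_zero this
  · -- k=i, j=k+1, w_k=false : del i - del (k+1) = 0, contra
    exfalso
    have hr := coe_add_eq_zero h
    have h7 := del_false h3.2
    rw [h1] at h7 hr; linarith
  · -- k=i+1 (w_i true), j=k
    right; exact ⟨by omega, h4.2⟩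
  · -- k=i+1, j=k+1, w_k false : contra
    exfalso
    have hr := coe_add_eq_zero h
    have h7 := del_false h6.2
    rw [h4.1] at h7 hr
    have := mu_ge w.length ((i:ℕ)+1); linarith

lemma BA_term_zero (w : List Bool) (i k j : Fin (w.length+1))
    (h : matB w i k + matA w k j = 0) :
    ((j:ℕ) = (i:ℕ) ∧ ((i:ℕ) = 0 ∨ (i:ℕ) = w.length)) ∨
      ((j:ℕ) = (i:ℕ)+1 ∧ w.getD (i:ℕ) true = false) := by
  unfold matA matB at h
  split_ifs at h with h1 h2 h3 h4 h5 h6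
  all_goals try simp only [WithBot.bot_add, WithBot.add_bot] at h
  all_goals try exact absurd h (by simp)
  · have hr := coe_add_eq_zero h
    left
    refine ⟨by omega, ?_⟩
    rw [h1] at hr
    have : mu w.length (i:ℕ) = 0 := by linarith
    exact mu_eq_zero this
  · -- k=i, j=k+1, w_k=true : (mu i - del i) + (del(k+1) - mu(k+1)) = 0, contra
    exfalso
    have hr := coe_add_eq_zero h
    have h7 := del_true h3.2
    rw [h1] at h7 hr
    have := mu_le w.length (i:ℕ)
    have := mu_ge w.length ((i:ℕ)+1); linarith
  · right; exact ⟨by omega, h4.2⟩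
  · exfalso
    have hr := coe_add_eq_zero h
    have h7 := del_true h6.2
    rw [h4.1] at h7 hr
    have := mu_ge w.length ((i:ℕ)+1+1); linarith

noncomputable def letter (w : List Bool) (c : Bool) :
    Matrix (Fin (w.length+1)) (Fin (w.length+1)) Trop :=
  if c then tmul (matA w) (matB w) else tmul (matB w) (matA w)

lemma letter_le (w : List Bool) (c : Bool) (i j : Fin (w.length+1)) :
    letter w c i j ≤ 0 := by
  cases c
  · exact show tmul (matB w) (matA w) i j ≤ 0 from
      Finset.sup_le fun k _ => BA_term_le w i k j
  · exact show tmul (matA w) (matB w) i j ≤ 0 from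
      Finset.sup_le fun k _ => AB_term_le w i k j

lemma letter_zero_char (w : List Bool) (c : Bool) (i j : Fin (w.length+1))
    (h : letter w c i j = 0) :
    ((j:ℕ) = (i:ℕ) ∧ ((i:ℕ) = 0 ∨ (i:ℕ) = w.length)) ∨
      ((j:ℕ) = (i:ℕ)+1 ∧ w.getD (i:ℕ) true = c) := by
  cases c
  · obtain ⟨k, -, hk⟩ := Finset.exists_mem_eq_sup Finset.univ Finset.univ_nonempty
      (fun k => matB w i k + matA w k j)
    exact BA_term_zero w i k j (hk.symm.trans h)
  · obtain ⟨k, -, hk⟩ := Finset.exists_mem_eq_sup Finset.univ Finset.univ_nonempty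
      (fun k => matA w i k + matB w k j)
    exact AB_term_zero w i k j (hk.symm.trans h)

lemma letter_diag_zero (w : List Bool) (c : Bool) (i : Fin (w.length+1))
    (hi : (i:ℕ) = 0 ∨ (i:ℕ) = w.length) : letter w c i i = 0 := by
  refine le_antisymm (letter_le w c i i) ?_
  have hA : matA w i i = ((del w (i:ℕ) : ℝ) : Trop) := by simp [matA]
  have hB : matB w i i = ((mu w.length (i:ℕ) - del w (i:ℕ) : ℝ) : Trop) := by simp [matB]
  cases c
  · refine le_trans ?_ (Finset.le_sup (Finset.mem_univ i))
    rw [hA, hB, ← WithBot.coe_add, ← WithBot.coe_zero, WithBot.coe_le_coe]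
    rw [mu_of hi]; ring_nf; exact le_refl 0
  · refine le_trans ?_ (Finset.le_sup (Finset.mem_univ i))
    rw [hA, hB, ← WithBot.coe_add, ← WithBot.coe_zero, WithBot.coe_le_coe]
    rw [mu_of hi]; ring_nf; exact le_refl 0

lemma letter_succ_zero (w : List Bool) (c : Bool) (i k : Fin (w.length+1))
    (hk : (k:ℕ) = (i:ℕ)+1) (hc : w.getD (i:ℕ) true = c) : letter w c i k = 0 := by
  refine le_antisymm (letter_le w c i k) ?_
  have hne : ¬ ((k:ℕ) = (i:ℕ)) := by omega
  cases c
  · -- B i k = -del(i+1), A k k = del k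
    have hB : matB w i k = ((-del w ((i:ℕ)+1) : ℝ) : Trop) := by
      unfold matB; rw [if_neg hne, if_pos ⟨hk, hc⟩]
    have hA : matA w k k = ((del w ((k:ℕ)) : ℝ) : Trop) := by simp [matA]
    refine le_trans ?_ (Finset.le_sup (Finset.mem_univ k))
    rw [hB, hA, ← WithBot.coe_add, ← WithBot.coe_zero, WithBot.coe_le_coe, hk]
    ring_nf; exact le_refl 0
  · have hA : matA w i k = ((del w ((i:ℕ)+1) - mu w.length ((i:ℕ)+1) : ℝ) : Trop) := by
      unfold matA; rw [if_neg hne, if_pos ⟨hk, hc⟩]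
    have hB : matB w k k = ((mu w.length (k:ℕ) - del w (k:ℕ) : ℝ) : Trop) := by simp [matB]
    refine le_trans ?_ (Finset.le_sup (Finset.mem_univ k))
    rw [hA, hB, ← WithBot.coe_add, ← WithBot.coe_zero, WithBot.coe_le_coe, hk]
    ring_nf; exact le_refl 0

end Stmt1Aux

namespace Stmt1Aux

noncomputable def Ev (w t : List Bool) :
    Matrix (Fin (w.length+1)) (Fin (w.length+1)) Trop :=
  evalWord t (letter w true) (letter w false)

lemma Ev_nil (w : List Bool) : Ev w [] = tId (Fin (w.length+1)) := rfl

lemma Ev_cons (w : List Bool) (c : Bool) (t : List Bool) :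
    Ev w (c :: t) = tmul (letter w c) (Ev w t) := by cases c <;> rfl

lemma Ev_le (w t : List Bool) : ∀ i j, Ev w t i j ≤ 0 := by
  induction t with
  | nil =>
    intro i j
    rw [Ev_nil]; unfold tId
    split
    · exact le_refl 0
    · exact bot_le
  | cons c t ih =>
    intro i j
    rw [Ev_cons]
    exact Finset.sup_le fun k _ => add_nonpos (letter_le w c i k) (ih k j)

lemma Ev_last_last (w : List Bool) : ∀ t : List Bool,
    0 ≤ Ev w t (Fin.last w.length) (Fin.last w.length) := by
  intro t
  induction t with
  | nil => rw [Ev_nil]; unfold tId; rw [if_pos rfl]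
  | cons c t ih =>
    rw [Ev_cons]
    refine le_trans ?_ (Finset.le_sup (Finset.mem_univ (Fin.last w.length)))
    rw [letter_diag_zero w c _ (Or.inr (Fin.val_last _)), zero_add]
    exact ih

lemma Ev_climb (w : List Bool) : ∀ (l s : List Bool) (i : Fin (w.length+1)),
    (i:ℕ) + l.length = w.length →
    (∀ m, m < l.length → l.getD m true = w.getD ((i:ℕ)+m) true) →
    0 ≤ Ev w (l ++ s) i (Fin.last w.length) := by
  intro l
  induction l with
  | nil =>
    intro s i hlen _
    have : i = Fin.last w.length := Fin.ext (by simpa using hlen)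
    rw [this]
    simpa using Ev_last_last w s
  | cons c l ih =>
    intro s i hlen hmatch
    have hi : (i:ℕ) < w.length := by simp at hlen; omega
    have hk : ((⟨(i:ℕ)+1, by omega⟩ : Fin (w.length+1)) : ℕ) = (i:ℕ)+1 := rfl
    rw [show (c :: l) ++ s = c :: (l ++ s) from rfl, Ev_cons]
    refine le_trans ?_ (Finset.le_sup (Finset.mem_univ (⟨(i:ℕ)+1, by omega⟩ : Fin (w.length+1))))
    have h0 : letter w c i ⟨(i:ℕ)+1, by omega⟩ = 0 := by
      refine letter_succ_zero w c i _ hk ?_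
      have := hmatch 0 (by simp)
      simpa using this.symm
    rw [h0, zero_add]
    refine ih s _ (by simp at hlen ⊢; omega) ?_
    intro m hm
    have := hmatch (m+1) (by simpa using Nat.succ_lt_succ hm)
    rw [List.getD_cons_succ] at this
    rw [this, hk]
    congr 1
    omega

lemma Ev_loop (w : List Bool) : ∀ (p s : List Bool),
    0 ≤ Ev w (p ++ (w ++ s)) 0 (Fin.last w.length) := by
  intro p
  induction p with
  | nil =>
    intro s
    refine le_trans (le_of_eq rfl) (Ev_climb w w s 0 (by simp) ?_)
    intro m hm
    simp
  | cons c p ih =>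
    intro s
    rw [show (c :: p) ++ (w ++ s) = c :: (p ++ (w ++ s)) from rfl, Ev_cons]
    refine le_trans ?_ (Finset.le_sup (Finset.mem_univ (0 : Fin (w.length+1))))
    rw [letter_diag_zero w c 0 (Or.inl rfl), zero_add]
    exact ih s

lemma Ev_zero_char (w : List Bool) : ∀ (t : List Bool) (i : Fin (w.length+1)),
    Ev w t i (Fin.last w.length) = 0 →
    (i:ℕ) = w.length ∨ ((i:ℕ) = 0 ∧ w <:+: t) ∨
      (0 < (i:ℕ) ∧ w.drop (i:ℕ) <+: t) := by
  intro t
  induction t with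
  | nil =>
    intro i h
    left
    rcases eq_or_ne i (Fin.last w.length) with rfl | hne
    · exact Fin.val_last _
    · rw [Ev_nil] at h
      unfold tId at h
      rw [if_neg hne] at h
      exact absurd h (by simp)
  | cons c t ih =>
    intro i h
    rw [Ev_cons] at h
    obtain ⟨k, -, hk⟩ := Finset.exists_mem_eq_sup Finset.univ Finset.univ_nonempty
      (fun k => letter w c i k + Ev w t k (Fin.last w.length))
    have hterm : letter w c i k + Ev w t k (Fin.last w.length) = 0 := hk.symm.trans h
    obtain ⟨hL, hE⟩ := add_eq_zero_split (letter_le w c i k) (Ev_le w t k _) hterm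
    rcases letter_zero_char w c i k hL with ⟨hji, hi0n⟩ | ⟨hsucc, hgd⟩
    · -- k = i
      have hk_eq : k = i := Fin.ext hji
      rcases hi0n with hi0 | hin
      · rcases ih i (hk_eq ▸ hE) with hn | ⟨-, hinf⟩ | ⟨hpos, -⟩
        · exact Or.inl hn
        · exact Or.inr (Or.inl ⟨hi0, List.infix_cons hinf⟩)
        · omega
      · exact Or.inl hin
    · -- k = i+1, w.getD i = c
      have hi_lt : (i:ℕ) < w.length := by have := k.isLt; omega
      have hdrop : w.drop (i:ℕ) = c :: w.drop ((i:ℕ)+1) := by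
        rw [List.drop_eq_getElem_cons hi_lt]
        congr 1
        exact (List.getD_eq_getElem w true hi_lt).symm.trans hgd
      have hpre : w.drop (i:ℕ) <+: c :: t := by
        rcases ih k hE with hn | ⟨h0, -⟩ | ⟨-, hp⟩
        · have hnil : w.drop ((i:ℕ)+1) = [] := List.drop_eq_nil_of_le (by omega)
          rw [hdrop, hnil]
          exact List.cons_prefix_cons.mpr ⟨rfl, List.nil_prefix⟩
        · omega
        · rw [hsucc] at hp
          rw [hdrop]
          exact List.cons_prefix_cons.mpr ⟨rfl, hp⟩
      rcases Nat.eq_zero_or_pos (i:ℕ) with hi0 | hip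
      · refine Or.inr (Or.inl ⟨hi0, ?_⟩)
        rw [hi0] at hpre
        rw [List.drop_zero] at hpre
        exact hpre.isInfix
      · exact Or.inr (Or.inr ⟨hip, hpre⟩)

end Stmt1Aux

/-- If `w` has length `n` and is a factor of `u` but not of `v`, then there exist
`A, B ∈ UT_{n+1}(𝕋)` with `u(AB, BA) ≠ v(AB, BA)`. -/
theorem stmt1 (n : ℕ) (u v w : List Bool) (hw : w.length = n)
    (hu : w <:+: u) (hv : ¬ w <:+: v) :
    ∃ A B : Matrix (Fin (n + 1)) (Fin (n + 1)) Trop, IsUT A ∧ IsUT B ∧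
      evalWord u (tmul A B) (tmul B A) ≠ evalWord v (tmul A B) (tmul B A) := by
  subst hw
  by_cases hnil : w = []
  · subst hnil
    exact absurd (List.nil_infix) hv
  have hlen : 0 < w.length := List.length_pos_iff.mpr hnil
  refine ⟨Stmt1Aux.matA w, Stmt1Aux.matB w, ?_, ?_, ?_⟩
  · intro i j hji
    unfold Stmt1Aux.matA
    split_ifs with h1 h2
    · exact absurd h1 (by omega)
    · exact absurd h2.1 (by omega)
    · rfl
  · intro i j hji
    unfold Stmt1Aux.matB
    split_ifs with h1 h2
    · exact absurd h1 (by omega)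
    · exact absurd h2.1 (by omega)
    · rfl
  · intro heq
    have heq' : Stmt1Aux.Ev w u = Stmt1Aux.Ev w v := heq
    have hu0 : Stmt1Aux.Ev w u 0 (Fin.last w.length) = 0 := by
      obtain ⟨p, s, rfl⟩ := hu
      refine le_antisymm (Stmt1Aux.Ev_le w _ _ _) ?_
      rw [List.append_assoc]
      exact Stmt1Aux.Ev_loop w p s
    have hv0 : Stmt1Aux.Ev w v 0 (Fin.last w.length) = 0 :=
      (congrFun (congrFun heq' 0) (Fin.last w.length)).symm.trans hu0
    rcases Stmt1Aux.Ev_zero_char w v 0 hv0 with hn | ⟨-, hinf⟩ | ⟨hp, -⟩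
    · simp at hn; omega
    · exact hv hinf
    · simp at hp
end

section
/- With the matrices A = A_w, B = B_w constructed from a word w of length n as above, define f_w(t) = (t(AB, BA))_{1, n+1} for any word t over {a,b}. Then f_w(t) ≤ f_w(w) for every word t, with equality if and only if w is a factor of t. -/
/-- The parameters `c₁, …, c_{n+1}` from a word `w` (indexed here from `0`):
`wparam w k` is the paper's `c_{k+1}`. -/
def wparam (w : List Bool) (k : ℕ) : ℝ :=
  ((w.take k).count false : ℝ) - ((w.take k).count true : ℝ)

/-!
Both `A_w B_w` and `B_w A_w` are supported on the superdiagonal plus the two corner loops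
`(1,1)` and `(n+1,n+1)` of weight `0`. Hence `f_w(t)` is the best weight of a path
`1 → n+1` of length `|t|` in this graph: it waits at `1`, reads a factor `u` of `t` of length `n`
while climbing (step `k` costs `c_k` on `a`, `c_{k+1}` on `b`), then waits at `n+1`.
Since `c_{k+1} = c_k ∓ 1` according to `w_{(k)}`, at each step the letter `w_{(k)}` is strictly
the better one, so the weight of `u` is maximal exactly for `u = w`.
-/

lemma Finset.univ_sup_eq_sup_of_eq_bot {ι α : Type*} [Fintype ι] [SemilatticeSup α] [OrderBot α]
    (s : Finset ι) (f : ι → α) (h : ∀ k ∉ s, f k = ⊥) : Finset.univ.sup f = s.sup f := by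
  refine le_antisymm (Finset.sup_le fun k _ => ?_) (Finset.sup_mono (Finset.subset_univ s))
  by_cases hk : k ∈ s
  · exact Finset.le_sup hk
  · rw [h k hk]
    exact bot_le

def LeWithEqIff (x : Trop) (m : ℝ) (P : Prop) : Prop :=
  x ≤ m ∧ (x = m ↔ P)

namespace LeWithEqIff

variable {x y : Trop} {a b m : ℝ} {P Q : Prop}

lemma refl (m : ℝ) : LeWithEqIff m m True :=
  ⟨le_rfl, iff_of_true rfl trivial⟩

lemma bot (m : ℝ) : LeWithEqIff ⊥ m False :=
  ⟨bot_le, iff_of_false WithBot.bot_ne_coe id⟩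

lemma congr_prop (h : LeWithEqIff x m P) (hPQ : P ↔ Q) : LeWithEqIff x m Q :=
  ⟨h.1, h.2.trans hPQ⟩

lemma of_lt_of_ne {α : Type*} {c : α} {f : α → ℝ} (hf : ∀ c', c' ≠ c → f c' < f c) (c' : α) :
    LeWithEqIff (f c') (f c) (c' = c) := by
  by_cases hc : c' = c
  · subst hc
    exact (refl _).congr_prop (iff_of_true trivial rfl)
  · have hlt := hf c' hc
    exact ⟨WithBot.coe_le_coe.mpr hlt.le, iff_of_false (by exact_mod_cast hlt.ne) hc⟩

lemma sup (hx : LeWithEqIff x m P) (hy : LeWithEqIff y m Q) :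
    LeWithEqIff (x ⊔ y) m (P ∨ Q) := by
  refine ⟨sup_le hx.1 hy.1, ?_⟩
  rw [← hx.2, ← hy.2, max_eq_iff]
  constructor
  · rintro (⟨h, -⟩ | ⟨h, -⟩) <;> simp [h]
  · rintro (h | h)
    · exact Or.inl ⟨h, h ▸ hy.1⟩
    · exact Or.inr ⟨h, h ▸ hx.1⟩

lemma coe_add (ha : LeWithEqIff a b P) (hx : LeWithEqIff x m Q) :
    LeWithEqIff (a + x) (b + m) (P ∧ Q) := by
  have hab : a ≤ b := WithBot.coe_le_coe.mp ha.1
  induction x using WithBot.recBotCoe with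
  | bot =>
    simpa [hx.2.symm.trans (iff_of_false WithBot.bot_ne_coe id)] using bot (b + m)
  | coe x =>
    have hxm : x ≤ m := WithBot.coe_le_coe.mp hx.1
    have hP : a = b ↔ P := by simpa using ha.2
    have hQ : x = m ↔ Q := by simpa using hx.2
    refine ⟨by exact_mod_cast add_le_add hab hxm, ?_⟩
    rw [← hP, ← hQ, ← WithBot.coe_add, WithBot.coe_inj]
    constructor
    · intro h
      constructor <;> linarith
    · rintro ⟨rfl, rfl⟩
      rfl

end LeWithEqIff

lemma tmul_apply_of_diag_left {ι : Type*} [Fintype ι] [DecidableEq ι] {A : Matrix ι ι Trop}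
    {d : ι → ℝ} (hA : ∀ i j, A i j = if i = j then (d i : Trop) else ⊥)
    (B : Matrix ι ι Trop) (i j : ι) : tmul A B i j = d i + B i j := by
  unfold tmul
  rw [Finset.univ_sup_eq_sup_of_eq_bot {i} _ fun k hk => by
      rw [hA, if_neg (Ne.symm (Finset.notMem_singleton.mp hk)), WithBot.bot_add],
    Finset.sup_singleton, hA, if_pos rfl]

lemma tmul_apply_of_diag_right {ι : Type*} [Fintype ι] [DecidableEq ι] {A : Matrix ι ι Trop}
    {d : ι → ℝ} (hA : ∀ i j, A i j = if i = j then (d i : Trop) else ⊥)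
    (B : Matrix ι ι Trop) (i j : ι) : tmul B A i j = B i j + d j := by
  unfold tmul
  rw [Finset.univ_sup_eq_sup_of_eq_bot {j} _ fun k hk => by
      rw [hA, if_neg (Finset.notMem_singleton.mp hk), WithBot.add_bot],
    Finset.sup_singleton, hA, if_pos rfl]

def pathMatrix (n : ℕ) (d : ℕ → ℝ) : Matrix (Fin (n + 1)) (Fin (n + 1)) Trop :=
  fun i j => if (i : ℕ) + 1 = j then (d i : Trop)
    else if i = j ∧ ((i : ℕ) = 0 ∨ (i : ℕ) = n) then 0 else ⊥

section pathMatrix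

variable {n : ℕ} (d : ℕ → ℝ) (M : Matrix (Fin (n + 1)) (Fin (n + 1)) Trop)

lemma tmul_pathMatrix_apply_castSucc (k : Fin n) (j : Fin (n + 1)) :
    tmul (pathMatrix n d) M k.castSucc j
      = (if (k : ℕ) = 0 then M k.castSucc j else ⊥) ⊔ (d k + M k.succ j) := by
  unfold tmul
  rw [Finset.univ_sup_eq_sup_of_eq_bot {k.castSucc, k.succ} _ fun i hi => ?_,
    Finset.sup_insert, Finset.sup_singleton]
  · unfold pathMatrix
    congr 1
    · by_cases hk : (k : ℕ) = 0 <;> simp [hk, k.isLt.ne]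
    · simp
  · simp only [Finset.mem_insert, Finset.mem_singleton, not_or, Fin.ext_iff, Fin.val_succ,
      Fin.val_castSucc] at hi
    simp only [pathMatrix, Fin.ext_iff, Fin.val_castSucc]
    rw [if_neg (Ne.symm hi.2), if_neg (fun h => hi.1 h.1.symm), WithBot.bot_add]

lemma tmul_pathMatrix_apply_last (j : Fin (n + 1)) :
    tmul (pathMatrix n d) M (Fin.last n) j = M (Fin.last n) j := by
  unfold tmul
  rw [Finset.univ_sup_eq_sup_of_eq_bot {Fin.last n} _ fun i hi => ?_, Finset.sup_singleton]
  · simp [pathMatrix]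
  · have hi : (i : ℕ) ≠ n := fun h => Finset.notMem_singleton.mp hi (Fin.ext h)
    simp only [pathMatrix, Fin.val_last]
    rw [if_neg (by omega), if_neg (fun h => hi (congrArg Fin.val h.1).symm), WithBot.bot_add]

end pathMatrix

def letterEval (n : ℕ) (ρ : ℕ → Bool → ℝ) (t : List Bool) :
    Matrix (Fin (n + 1)) (Fin (n + 1)) Trop :=
  evalWord t (pathMatrix n (ρ · true)) (pathMatrix n (ρ · false))

def wordWeight (ρ : ℕ → Bool → ℝ) : List Bool → ℕ → ℝ
  | [], _ => 0
  | c :: u, i => ρ i c + wordWeight ρ u (i + 1)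

section letterEval

variable (ρ : ℕ → Bool → ℝ)

lemma letterEval_cons {n : ℕ} (c : Bool) (t : List Bool) :
    letterEval n ρ (c :: t) = tmul (pathMatrix n (ρ · c)) (letterEval n ρ t) := by
  cases c <;> rfl

lemma letterEval_last_last {n : ℕ} (t : List Bool) :
    letterEval n ρ t (Fin.last n) (Fin.last n) = 0 := by
  induction t with
  | nil => simp [letterEval, evalWord, tId]
  | cons c t ih => rw [letterEval_cons, tmul_pathMatrix_apply_last, ih]

variable {ρ} {w : List Bool}
    (hρ : ∀ (k : ℕ) (hk : k < w.length) (c : Bool), c ≠ w[k] → ρ k c < ρ k w[k])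
include hρ

lemma leWithEqIff_add_wordWeight_drop {k : Fin w.length} {x : Trop} {t : List Bool}
    (hx : LeWithEqIff x (wordWeight ρ (w.drop k.succ) k.succ) (w.drop k.succ <+: t))
    (c : Bool) :
    LeWithEqIff (ρ k c + x) (wordWeight ρ (w.drop k) k) (w.drop k <+: c :: t) := by
  rw [List.drop_eq_getElem_cons k.isLt, wordWeight, List.cons_prefix_cons]
  exact ((LeWithEqIff.of_lt_of_ne (hρ k k.isLt) c).coe_add hx).congr_prop
    (and_congr_left' eq_comm)

lemma leWithEqIff_letterEval_wordWeight_drop (t : List Bool) (k : Fin (w.length + 1))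
    (hk : k ≠ 0) :
    LeWithEqIff (letterEval w.length ρ t k (Fin.last _)) (wordWeight ρ (w.drop k) k)
      (w.drop k <+: t) := by
  have last (t : List Bool) : LeWithEqIff (letterEval w.length ρ t (Fin.last _) (Fin.last _))
      (wordWeight ρ (w.drop w.length) w.length) (w.drop w.length <+: t) := by
    rw [letterEval_last_last, List.drop_length, wordWeight]
    exact (LeWithEqIff.refl 0).congr_prop (iff_of_true trivial List.nil_prefix)
  induction t generalizing k with
  | nil =>
    cases k using Fin.lastCases with
    | last => exact last []
    | cast k =>
      have hne : w.drop k ≠ [] := by simp [List.drop_eq_nil_iff, k.isLt]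
      simpa [letterEval, evalWord, tId, k.castSucc_lt_last.ne, List.prefix_nil, hne]
        using LeWithEqIff.bot (wordWeight ρ (w.drop k) k)
  | cons c t ih =>
    cases k using Fin.lastCases with
    | last => exact last _
    | cast k =>
      have hk0 : (k : ℕ) ≠ 0 := fun h => hk (Fin.ext h)
      rw [letterEval_cons, tmul_pathMatrix_apply_castSucc, if_neg hk0, bot_sup_eq]
      exact leWithEqIff_add_wordWeight_drop hρ (ih k.succ (Fin.succ_ne_zero k)) c

lemma leWithEqIff_letterEval_zero_last (t : List Bool) :
    LeWithEqIff (letterEval w.length ρ t 0 (Fin.last _)) (wordWeight ρ w 0) (w <:+: t) := by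
  rcases Nat.eq_zero_or_pos w.length with hw | hw
  · rw [show (0 : Fin (w.length + 1)) = Fin.last _ from Fin.ext hw.symm, letterEval_last_last,
      List.length_eq_zero_iff.mp hw, wordWeight]
    exact (LeWithEqIff.refl 0).congr_prop (iff_of_true trivial List.nil_infix)
  set k : Fin w.length := ⟨0, hw⟩
  rw [show (0 : Fin (w.length + 1)) = k.castSucc from rfl]
  induction t with
  | nil =>
    simpa [letterEval, evalWord, tId, k.castSucc_lt_last.ne, List.infix_nil,
      List.ne_nil_of_length_pos hw] using LeWithEqIff.bot (wordWeight ρ w 0)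
  | cons c t ih =>
    rw [letterEval_cons, tmul_pathMatrix_apply_castSucc, if_pos rfl, List.infix_cons_iff, or_comm]
    have hprefix := leWithEqIff_add_wordWeight_drop hρ
      (leWithEqIff_letterEval_wordWeight_drop hρ t k.succ (Fin.succ_ne_zero k)) c
    exact ih.sup hprefix

end letterEval

/-- `A_w B_w` (letter `a`) and `B_w A_w` (letter `b`) carry `letterWeight w k` at `(k, k+1)`. -/
def letterWeight (w : List Bool) (k : ℕ) (c : Bool) : ℝ :=
  if c then wparam w k else wparam w (k + 1)

lemma wparam_succ (w : List Bool) (k : ℕ) (hk : k < w.length) :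
    wparam w (k + 1) = wparam w k + if w[k] then -1 else 1 := by
  rw [wparam, wparam, List.take_add_one, List.getElem?_eq_getElem hk]
  cases w[k] <;> simp <;> ring

lemma letterWeight_lt_letterWeight_getElem (w : List Bool) (k : ℕ) (hk : k < w.length)
    (c : Bool) (hc : c ≠ w[k]) : letterWeight w k c < letterWeight w k w[k] := by
  have hsucc := wparam_succ w k hk
  cases hw : w[k] <;> cases c <;> simp_all [letterWeight]

/-- With `A = A_w`, `B = B_w` built from a word `w` of length `n`, and
`f_w(t) = (t(AB, BA))_{1, n+1}`, one has `f_w(t) ≤ f_w(w)` for every word `t`,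
with equality if and only if `w` is a factor of `t`. -/
theorem stmt3 (n : ℕ) (w : List Bool) (hw : w.length = n)
    (A B : Matrix (Fin (n + 1)) (Fin (n + 1)) Trop)
    (hA : ∀ i j : Fin (n + 1), A i j =
      if i = j then ((wparam w (i : ℕ) : ℝ) : Trop) else ⊥)
    (hB : ∀ i j : Fin (n + 1), B i j =
      if (i : ℕ) + 1 = (j : ℕ) then (0 : Trop)
      else if i = j ∧ ((i : ℕ) = 0 ∨ (i : ℕ) = n) then ((-(wparam w (i : ℕ)) : ℝ) : Trop)
      else ⊥) :
    ∀ t : List Bool,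
      evalWord t (tmul A B) (tmul B A) 0 (Fin.last n) ≤
        evalWord w (tmul A B) (tmul B A) 0 (Fin.last n) ∧
      (evalWord t (tmul A B) (tmul B A) 0 (Fin.last n) =
          evalWord w (tmul A B) (tmul B A) 0 (Fin.last n) ↔ w <:+: t) := by
  subst hw
  have hAB : tmul A B = pathMatrix w.length (letterWeight w · true) := by
    ext i j
    rw [tmul_apply_of_diag_left hA, hB]
    unfold pathMatrix letterWeight
    split_ifs <;> simp_all [← WithBot.coe_add]
  have hBA : tmul B A = pathMatrix w.length (letterWeight w · false) := by
    ext i j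
    rw [tmul_apply_of_diag_right hA, hB]
    unfold pathMatrix letterWeight
    split_ifs <;> simp_all [← WithBot.coe_add]
  have hf (t : List Bool) : evalWord t (tmul A B) (tmul B A) 0 (Fin.last _)
      = letterEval w.length (letterWeight w) t 0 (Fin.last _) := by
    rw [hAB, hBA]
    rfl
  have key := leWithEqIff_letterEval_zero_last (letterWeight_lt_letterWeight_getElem w)
  intro t
  rw [hf, hf, (key w).2.mpr (List.infix_refl w)]
  exact key t
end

section
/- Let n ≥ 4 and let w̃ = b(ab)^{(n-2)/2} if n is even and w̃ = (ba)^{(n-1)/2} if n is odd. Let w₁,…,w_m be all words of length n-1 over {a,b}, and let w'_i be obtained from w_i by removing a prefix b² if present and a suffix a² (if n even) respectively a suffix b² (if n odd) if present. Define w̄ = w̃ba(b²w'₁a²)(b²w'₂a²)⋯(b²w'_ma²)b²a if n is even, and w̄ = w̃(b²w'₁b²)a(b²w'₂b²)⋯a(b²w'_mb²)a if n is odd. Then w̄ contains every word of length n-1 over {a,b} as a factor, and neither u = w̄aw̄ nor v = w̄bw̄ contains aⁿ or bⁿ as a factor, while w = aw̃ (of length n) is a factor of u but not of v. -/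
/-!
Write `a = true`, `b = false`. Re-attaching what was stripped, every block `b²w'a²`
(resp. `b²w'b²a`) is `x` padded by `b²` in front unless `x` already starts with `b²`, and by
`a²` (resp. `b²`) behind unless `x` already ends with it (and followed by `a` when `n` is odd).
So it contains `x`, and since `|x| = n - 1`, the padding cannot complete `aⁿ`, `bⁿ` or the
alternating word `aw̃` inside a block. Now `w̄` is the concatenation of `w̃ba` (resp. `w̃`), the
blocks and (for even `n`) `b²a`: all pieces end in `a` and all but the first begin with `b²`.
Hence a run cannot cross a cut, and an occurrence of the alternating word `aw̃` crossing a cut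
ends in the single `b` after it, so it leaves an alternating word of length `n - 1` as a suffix
of the piece, which ends in `a²` or `b²a` (for odd `n`, `aw̃` does not even end in `b`).
The middle letter of `u` and `v` is handled the same way, since `w̄` begins with `w̃` and ends
with `b²a`.
-/

/-- `k`-fold concatenation of a word. -/
def repW (x : List Bool) (k : ℕ) : List Bool := (List.replicate k x).flatten

/-- Remove the prefix `s` from `x` if possible. -/
def stripPre (s x : List Bool) : List Bool :=
  if s <+: x then x.drop s.length else x

/-- Remove the suffix `s` from `x` if possible. -/
def stripSuf (s x : List Bool) : List Bool :=
  if s <:+ x then x.take (x.length - s.length) else x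

/-- The word `w̃`: `b(ab)^{(n-2)/2}` if `n` is even, `(ba)^{(n-1)/2}` if `n` is odd
(with `a = true`, `b = false`). -/
def wtilde (n : ℕ) : List Bool :=
  if n % 2 = 0 then [false] ++ repW [true, false] ((n - 2) / 2)
  else repW [false, true] ((n - 1) / 2)

/-- `w'` obtained from a word by removing a prefix `b²` if possible and a suffix
`a²` (if `n` even) resp. `b²` (if `n` odd) if possible. -/
def wprime (n : ℕ) (x : List Bool) : List Bool :=
  if n % 2 = 0 then stripSuf [true, true] (stripPre [false, false] x)
  else stripSuf [false, false] (stripPre [false, false] x)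

/-- The word `w̄` built from `w̃` and a complete list `L` of the words of
length `n - 1`. -/
def wbar (n : ℕ) (L : List (List Bool)) : List Bool :=
  if n % 2 = 0 then
    wtilde n ++ [false, true] ++
      (L.map fun x => [false, false] ++ wprime n x ++ [true, true]).flatten ++
      [false, false, true]
  else
    wtilde n ++ (L.map fun x => [false, false] ++ wprime n x ++ [false, false, true]).flatten


open List

namespace List

variable {α : Type*}

theorem eq_of_prefix_of_prefix {u v l : List α} (hu : u <+: l) (hv : v <+: l)
    (h : u.length = v.length) : u = v :=
  (prefix_of_prefix_length_le hu hv h.le).eq_of_length h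

theorem eq_of_suffix_of_suffix {u v l : List α} (hu : u <:+ l) (hv : v <:+ l)
    (h : u.length = v.length) : u = v :=
  (suffix_of_suffix_length_le hu hv h.le).eq_of_length h

theorem replicate_prefix_replicate {m k : ℕ} (a : α) (h : m ≤ k) :
    replicate m a <+: replicate k a :=
  ⟨replicate (k - m) a, by rw [← replicate_add, Nat.add_sub_cancel' h]⟩

theorem replicate_suffix_replicate {m k : ℕ} (a : α) (h : m ≤ k) :
    replicate m a <:+ replicate k a :=
  ⟨replicate (k - m) a, by rw [← replicate_add, Nat.sub_add_cancel h]⟩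

theorem not_infix_of_length_lt {f l : List α} (h : l.length < f.length) : ¬ f <:+: l :=
  fun hf => (hf.length_le.trans_lt h).false

def Straddles (f l r : List α) : Prop :=
  ∃ p s, p ≠ [] ∧ s ≠ [] ∧ f = p ++ s ∧ p <:+ l ∧ s <+: r

theorem IsInfix.append_cases {f l r : List α} (h : f <:+: l ++ r) :
    f <:+: l ∨ f <:+: r ∨ Straddles f l r := by
  obtain h | h | ⟨p, s, rfl, hp, hs⟩ := infix_append_iff.mp h
  · exact .inl h
  · exact .inr (.inl h)
  · rcases eq_or_ne p [] with rfl | hp0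
    · exact .inr (.inl (by simpa using hs.isInfix))
    rcases eq_or_ne s [] with rfl | hs0
    · exact .inl (by simpa using hp.isInfix)
    exact .inr (.inr ⟨p, s, hp0, hs0, rfl, hp, hs⟩)

theorem infix_of_infix_append_of_head_notMem {f s y : List α} (h : f <:+: s ++ y)
    (hf : ∀ c ∈ f.head?, c ∉ s) : f <:+: y := by
  rcases h.append_cases with h | h | ⟨p, t, hp, -, rfl, hps, -⟩
  · rcases f with _ | ⟨c, f⟩
    · exact nil_infix
    · exact absurd (h.subset mem_cons_self) (hf c rfl)
  · exact h
  · obtain ⟨c, p, rfl⟩ := exists_cons_of_ne_nil hp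
    exact absurd (hps.subset mem_cons_self) (hf c rfl)

theorem infix_of_infix_append_of_getLast_notMem {f y t : List α} (h : f <:+: y ++ t)
    (hf : ∀ c ∈ f.getLast?, c ∉ t) : f <:+: y := by
  rw [← reverse_infix, reverse_append] at h
  rw [← reverse_infix]
  exact infix_of_infix_append_of_head_notMem h (by simpa [head?_reverse] using hf)

theorem not_infix_flatten {f q : List α} (hf : f ≠ []) :
    ∀ {Ps : List (List α)}, (∀ P ∈ Ps, ¬ f <:+: P) → (∀ P ∈ Ps.tail, q <+: P) →
      (∀ P ∈ Ps, ∀ R, q <+: R → ¬ Straddles f P R) → ¬ f <:+: Ps.flatten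
  | [], _, _, _ => by simpa using hf
  | P :: Ps, hP, hq, hcut => by
    rw [flatten_cons]
    intro h
    rcases h.append_cases with h | h | h
    · exact hP P mem_cons_self h
    · exact not_infix_flatten hf (fun Q hQ => hP Q (mem_cons_of_mem _ hQ))
        (fun Q hQ => hq Q (mem_of_mem_tail hQ)) (fun Q hQ => hcut Q (mem_cons_of_mem _ hQ)) h
    · cases Ps with
      | nil =>
        obtain ⟨p, s, -, hs, -, -, hsr⟩ := h
        exact hs (prefix_nil.mp hsr)
      | cons Q Qs =>
        exact hcut P mem_cons_self _ ((hq Q mem_cons_self).trans (prefix_append _ _)) h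

theorem Straddles.replicate {n : ℕ} {c : α} {l r : List α} (h : Straddles (replicate n c) l r) :
    ∃ i, 0 < i ∧ i < n ∧ replicate i c <:+ l ∧ replicate (n - i) c <+: r := by
  obtain ⟨p, s, hp, hs, he, hpl, hsr⟩ := h
  obtain ⟨hlen, hp', hs'⟩ := append_eq_replicate_iff.mp he.symm
  refine ⟨p.length, length_pos_iff.mpr hp, ?_, hp' ▸ hpl, ?_⟩
  · have := length_pos_iff.mpr hs; omega
  · rwa [show n - p.length = s.length by omega, ← hs']

theorem replicate_infix_append_replicate {n k : ℕ} {c : α} {y : List α}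
    (h : replicate n c <:+: y ++ replicate k c) :
    replicate (n - k) c <:+ y ∨ replicate n c <:+: y := by
  rcases h.append_cases with h | h | h
  · exact .inr h
  · have hnk : n ≤ k := by simpa using h.length_le
    exact .inl (Nat.sub_eq_zero_of_le hnk ▸ nil_suffix)
  · obtain ⟨i, -, -, hi, hk⟩ := h.replicate
    have : n - i ≤ k := by simpa using hk.length_le
    exact .inl ((replicate_suffix_replicate c (by omega)).trans hi)

theorem replicate_infix_replicate_append {n k : ℕ} {c : α} {y : List α}
    (h : replicate n c <:+: replicate k c ++ y) :
    replicate (n - k) c <+: y ∨ replicate n c <:+: y := by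
  rw [← reverse_infix, reverse_append, reverse_replicate, reverse_replicate] at h
  rw [← reverse_infix, reverse_replicate, ← reverse_suffix, reverse_replicate]
  exact replicate_infix_append_replicate h

theorem Straddles.exists_eq_append_singleton {f l r : List α} {c : α}
    (h : Straddles f l (c :: c :: r)) (hf : f.IsChain (· ≠ ·)) :
    ∃ p, f = p ++ [c] ∧ p <:+ l := by
  obtain ⟨p, s, -, hs, rfl, hpl, hsr⟩ := h
  obtain _ | ⟨d, _ | ⟨e, s⟩⟩ := s
  · exact absurd rfl hs
  · obtain ⟨rfl, -⟩ := cons_prefix_cons.mp hsr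
    exact ⟨p, rfl, hpl⟩
  · obtain ⟨hd, he, -⟩ : d = c ∧ e = c ∧ _ := by simpa using hsr
    have := hf.infix (show [d, e] <:+: p ++ d :: e :: s from ⟨p, s, by simp⟩)
    simp [hd, he] at this

theorem not_suffix_of_isChain {R : α → α → Prop} {p q l : List α} (hp : p.IsChain R)
    (hq : q <:+ l) (hqR : ¬ q.IsChain R) (hlen : q.length ≤ p.length) : ¬ p <:+ l :=
  fun hpl => hqR (hp.suffix (suffix_of_suffix_length_le hq hpl hlen))

end List

theorem repW_succ (x : List Bool) (k : ℕ) : repW x (k + 1) = x ++ repW x k := by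
  simp [repW, replicate_succ]

theorem repW_succ' (x : List Bool) (k : ℕ) : repW x (k + 1) = repW x k ++ x := by
  simp [repW, replicate_succ']

theorem length_repW (x : List Bool) (k : ℕ) : (repW x k).length = k * x.length := by
  induction k with
  | zero => simp [repW]
  | succ k ih => rw [repW_succ, length_append, ih]; ring

theorem isChain_not_cons_repW (c : Bool) (k : ℕ) :
    ((!c) :: repW [c, !c] k).IsChain (· ≠ ·) := by
  induction k with
  | zero => simp [repW]
  | succ k ih => simpa [repW_succ] using ih

theorem length_wtilde {n : ℕ} (hn : 2 ≤ n) : (wtilde n).length = n - 1 := by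
  rcases Nat.mod_two_eq_zero_or_one n with h | h <;> simp [wtilde, h, length_repW] <;> omega

theorem isChain_true_cons_wtilde (n : ℕ) : (true :: wtilde n).IsChain (· ≠ ·) := by
  rcases Nat.mod_two_eq_zero_or_one n with h | h
  · simpa [wtilde, h] using isChain_not_cons_repW true ((n - 2) / 2)
  · simpa [wtilde, h] using isChain_not_cons_repW false ((n - 1) / 2)

theorem prefix_wtilde {n : ℕ} (hn : 3 ≤ n) : [false, true] <+: wtilde n := by
  rcases Nat.mod_two_eq_zero_or_one n with h | h
  · obtain ⟨k, hk⟩ : ∃ k, (n - 2) / 2 = k + 1 := ⟨(n - 2) / 2 - 1, by omega⟩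
    simp [wtilde, h, hk, repW_succ]
  · obtain ⟨k, hk⟩ : ∃ k, (n - 1) / 2 = k + 1 := ⟨(n - 1) / 2 - 1, by omega⟩
    simp [wtilde, h, hk, repW_succ]

theorem getLast?_wtilde {n : ℕ} (hn : 3 ≤ n) :
    (wtilde n).getLast? = some (decide (n % 2 = 1)) := by
  rcases Nat.mod_two_eq_zero_or_one n with h | h
  · obtain ⟨k, hk⟩ : ∃ k, (n - 2) / 2 = k + 1 := ⟨(n - 2) / 2 - 1, by omega⟩
    simp [wtilde, h, hk, repW_succ', getLast?_cons]
  · obtain ⟨k, hk⟩ : ∃ k, (n - 1) / 2 = k + 1 := ⟨(n - 1) / 2 - 1, by omega⟩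
    simp [wtilde, h, hk, repW_succ']

theorem length_true_cons_wtilde {n : ℕ} (hn : 2 ≤ n) : (true :: wtilde n).length = n := by
  rw [length_cons, length_wtilde hn]; omega

theorem getLast?_true_cons_wtilde {n : ℕ} (hn : 3 ≤ n) :
    (true :: wtilde n).getLast? = some (decide (n % 2 = 1)) := by
  rw [getLast?_cons, getLast?_wtilde hn]; rfl

def prePad (s x : List Bool) : List Bool := if s <+: x then [] else s

def sufPad (t x : List Bool) : List Bool := if t <:+ x then [] else t

theorem prePad_eq_nil_or (s x : List Bool) :
    prePad s x = [] ∨ (prePad s x = s ∧ ¬ s <+: x) := by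
  unfold prePad; split_ifs with h <;> simp [h]

theorem sufPad_eq_nil_or (t x : List Bool) :
    sufPad t x = [] ∨ (sufPad t x = t ∧ ¬ t <:+ x) := by
  unfold sufPad; split_ifs with h <;> simp [h]

theorem suffix_append_sufPad (t x : List Bool) : t <:+ x ++ sufPad t x := by
  unfold sufPad; split_ifs with h
  · simpa using h
  · exact suffix_append _ _

theorem stripSuf_append_eq_append_sufPad (t y : List Bool) :
    stripSuf t y ++ t = y ++ sufPad t y := by
  unfold stripSuf sufPad
  split_ifs with h
  · obtain ⟨u, rfl⟩ := h
    simp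
  · rfl

theorem append_stripSuf_stripPre_append {s t x : List Bool}
    (h : ∀ y, x = s ++ y → t <:+ x → t <:+ y) :
    s ++ stripSuf t (stripPre s x) ++ t = prePad s x ++ x ++ sufPad t x := by
  unfold stripPre prePad
  split_ifs with hs
  · obtain ⟨y, rfl⟩ := hs
    have hsuf : sufPad t (s ++ y) = sufPad t y := by
      unfold sufPad
      split_ifs with h1 h2 h2
      · rfl
      · exact absurd (h y rfl h1) h2
      · exact absurd (h2.trans (suffix_append s y)) h1
      · rfl
    simp [append_assoc, stripSuf_append_eq_append_sufPad, hsuf]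
  · simp [append_assoc, stripSuf_append_eq_append_sufPad]

section Blocks

variable {n : ℕ} {x : List Bool}

theorem replicate_infix_prePad_append {c : Bool} {y : List Bool} (hn : 4 ≤ n)
    (hx : 2 ≤ x.length) (h : replicate n c <:+: prePad [c, c] x ++ (x ++ y)) :
    replicate n c <:+: x ++ y := by
  rcases prePad_eq_nil_or [c, c] x with hp | ⟨hp, hcx⟩ <;> rw [hp] at h
  · simpa using h
  refine (replicate_infix_replicate_append (k := 2) h).resolve_left fun hy => hcx ?_
  have := (replicate_prefix_replicate c (by omega : 2 ≤ n - 2)).trans hy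
  exact (isPrefix_append_of_length (by simpa using hx)).mp this

theorem replicate_infix_append_sufPad {c : Bool} (hn : 4 ≤ n)
    (h : replicate n c <:+: x ++ sufPad [c, c] x) : replicate n c <:+: x := by
  rcases sufPad_eq_nil_or [c, c] x with hp | ⟨hp, hcx⟩ <;> rw [hp] at h
  · simpa using h
  exact (replicate_infix_append_replicate (k := 2) h).resolve_left fun hy =>
    hcx ((replicate_suffix_replicate c (by omega : 2 ≤ n - 2)).trans hy)

theorem not_replicate_infix_padded (hn : 4 ≤ n) (hx : x.length = n - 1) (c d e : Bool) :
    ¬ replicate n c <:+: prePad [d, d] x ++ x ++ sufPad [e, e] x := by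
  intro h
  have h₁ : replicate n c <:+: x ++ sufPad [e, e] x := by
    rw [append_assoc] at h
    by_cases hcd : c = d
    · subst hcd
      exact replicate_infix_prePad_append hn (by omega) h
    · refine infix_of_infix_append_of_head_notMem h ?_
      rcases prePad_eq_nil_or [d, d] x with hp | ⟨hp, -⟩ <;> simp [hp, head?_replicate, hcd]
  have h₂ : replicate n c <:+: x := by
    by_cases hce : c = e
    · subst hce
      exact replicate_infix_append_sufPad hn h₁
    · refine infix_of_infix_append_of_getLast_notMem h₁ ?_
      rcases sufPad_eq_nil_or [e, e] x with hp | ⟨hp, -⟩ <;> simp [hp, getLast?_replicate, hce]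
  exact not_infix_of_length_lt (by simp; omega) h₂

theorem block_eq_of_even (hn : n % 2 = 0) :
    [false, false] ++ wprime n x ++ [true, true] =
      prePad [false, false] x ++ x ++ sufPad [true, true] x := by
  rw [wprime, if_pos hn]
  exact append_stripSuf_stripPre_append fun y hy h => by simpa [hy, suffix_cons_iff] using h

theorem block_eq_of_odd (hn : n % 2 = 1) (hx : 4 ≤ x.length) :
    [false, false] ++ wprime n x ++ [false, false, true] =
      prePad [false, false] x ++ x ++ sufPad [false, false] x ++ [true] := by
  rw [wprime, if_neg (by omega), show [false, false, true] = [false, false] ++ [true] from rfl,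
    ← append_assoc, append_stripSuf_stripPre_append]
  rintro y rfl h
  exact suffix_of_suffix_length_le h (suffix_append _ _) (by simp at hx ⊢; omega)

theorem not_infix_block_of_even (hn : 4 ≤ n) (hx : x.length = n - 1) {f : List Bool}
    (hf : f.length = n) (hhead : f.head? = some true) (hlast : f.getLast? = some false) :
    ¬ f <:+: prePad [false, false] x ++ x ++ sufPad [true, true] x := by
  intro h
  rw [append_assoc] at h
  have h₁ := infix_of_infix_append_of_head_notMem h <| by
    rcases prePad_eq_nil_or [false, false] x with hp | ⟨hp, -⟩ <;> simp [hp, hhead]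
  have h₂ := infix_of_infix_append_of_getLast_notMem h₁ <| by
    rcases sufPad_eq_nil_or [true, true] x with hp | ⟨hp, -⟩ <;> simp [hp, hlast]
  exact not_infix_of_length_lt (by omega) h₂

theorem not_replicate_infix_block_of_odd (hn : 4 ≤ n) (hx : x.length = n - 1) (c : Bool) :
    ¬ replicate n c <:+: prePad [false, false] x ++ x ++ sufPad [false, false] x ++ [true] := by
  intro h
  cases c
  · exact not_replicate_infix_padded hn hx false false false <|
      infix_of_infix_append_of_getLast_notMem h (by simp [getLast?_replicate])
  · rcases replicate_infix_append_replicate (k := 1) h with h | h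
    · have hbb : [false, false] <:+ prePad [false, false] x ++ x ++ sufPad [false, false] x := by
        rw [append_assoc]; exact (suffix_append_sufPad _ _).trans (suffix_append _ _)
      have := eq_of_suffix_of_suffix ((replicate_suffix_replicate true (by omega)).trans h)
        ((suffix_cons _ _).trans hbb) (by simp : (replicate 1 true).length = 1)
      simp at this
    · exact not_replicate_infix_padded hn hx true false false h

theorem not_infix_block_of_odd (hn : 4 ≤ n) (hx : x.length = n - 1) {f : List Bool}
    (hf : f.length = n) (hhead : f.head? = some true) (hlast : f.getLast? = some true)
    (hchain : f.IsChain (· ≠ ·)) :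
    ¬ f <:+: prePad [false, false] x ++ x ++ sufPad [false, false] x ++ [true] := by
  intro h
  rw [append_assoc, append_assoc] at h
  have h₁ := infix_of_infix_append_of_head_notMem h <| by
    rcases prePad_eq_nil_or [false, false] x with hp | ⟨hp, -⟩ <;> simp [hp, hhead]
  rw [← append_assoc] at h₁
  rcases h₁.append_cases with h₂ | h₂ | ⟨p, s, -, hs, rfl, hp, hs'⟩
  · refine not_infix_of_length_lt (by omega) (infix_of_infix_append_of_getLast_notMem h₂ ?_)
    rcases sufPad_eq_nil_or [false, false] x with hp | ⟨hp, -⟩ <;> simp [hp, hlast]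
  · exact not_infix_of_length_lt (by simp; omega) h₂
  · have hs1 : s.length = 1 := le_antisymm (by simpa using hs'.length_le) (length_pos_iff.mpr hs)
    refine not_suffix_of_isChain (hchain.infix (infix_append [] p s)) (suffix_append_sufPad _ x)
      (by simp) (by simp at hf ⊢; omega) hp

end Blocks

def pieces (n : ℕ) (L : List (List Bool)) : List (List Bool) :=
  if n % 2 = 0 then
    (wtilde n ++ [false, true]) ::
      ((L.map fun x => [false, false] ++ wprime n x ++ [true, true]) ++ [[false, false, true]])
  else wtilde n :: L.map fun x => [false, false] ++ wprime n x ++ [false, false, true]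

section Pieces

variable {n : ℕ} {L : List (List Bool)} {P : List Bool}

theorem wbar_eq_flatten_pieces : wbar n L = (pieces n L).flatten := by
  unfold wbar pieces; split_ifs <;> simp

theorem mem_pieces (hn : 4 ≤ n) (hL : ∀ x ∈ L, x.length = n - 1) (hP : P ∈ pieces n L) :
    (n % 2 = 0 ∧ P = wtilde n ++ [false, true]) ∨
    (n % 2 = 0 ∧ ∃ x, x.length = n - 1 ∧
      P = prePad [false, false] x ++ x ++ sufPad [true, true] x) ∨
    (n % 2 = 0 ∧ P = [false, false, true]) ∨
    (n % 2 = 1 ∧ P = wtilde n) ∨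
    (n % 2 = 1 ∧ ∃ x, x.length = n - 1 ∧
      P = prePad [false, false] x ++ x ++ sufPad [false, false] x ++ [true]) := by
  unfold pieces at hP
  split_ifs at hP with hpar
  · simp only [mem_cons, mem_append, mem_map, not_mem_nil, or_false] at hP
    rcases hP with rfl | ⟨x, hx, rfl⟩ | rfl
    · exact .inl ⟨hpar, rfl⟩
    · exact .inr (.inl ⟨hpar, x, hL x hx, block_eq_of_even hpar⟩)
    · exact .inr (.inr (.inl ⟨hpar, rfl⟩))
  · simp only [mem_cons, mem_map] at hP
    rcases hP with rfl | ⟨x, hx, rfl⟩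
    · exact .inr (.inr (.inr (.inl ⟨by omega, rfl⟩)))
    · exact .inr (.inr (.inr (.inr ⟨by omega, x, hL x hx, block_eq_of_odd (by omega) (by
        rw [hL x hx]; omega)⟩)))

theorem not_replicate_infix_wtilde_append (hn : 4 ≤ n) (c : Bool) :
    ¬ replicate n c <:+: wtilde n ++ [false, true] := by
  rw [show [false, true] = [false] ++ [true] from rfl, ← append_assoc]
  intro h
  cases c
  · have heq := (infix_of_infix_append_of_getLast_notMem h (by simp [getLast?_replicate]))
      |>.eq_of_length (by simp [length_wtilde (by omega : 2 ≤ n)]; omega)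
    have := (prefix_wtilde (by omega)).trans (heq ▸ prefix_append (wtilde n) [false])
    simpa using this.subset (mem_cons_of_mem _ mem_cons_self)
  · rcases replicate_infix_append_replicate (k := 1) h with h | h
    · have := eq_of_suffix_of_suffix ((replicate_suffix_replicate true (by omega)).trans h)
        (suffix_append _ _) (by simp : (replicate 1 true).length = 1)
      simp at this
    · exact not_infix_of_length_lt (by simp [length_wtilde (by omega : 2 ≤ n)]; omega)
        (infix_of_infix_append_of_getLast_notMem h (by simp [getLast?_replicate]))

theorem not_true_cons_wtilde_infix_wtilde_append (hn : 4 ≤ n) (hpar : n % 2 = 0) :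
    ¬ (true :: wtilde n) <:+: wtilde n ++ [false, true] := by
  rw [show [false, true] = [false] ++ [true] from rfl, ← append_assoc]
  intro h
  have heq := (infix_of_infix_append_of_getLast_notMem h (by
    simp [getLast?_true_cons_wtilde (by omega : 3 ≤ n), hpar])).eq_of_length (by simp)
  obtain ⟨w, hw⟩ := prefix_wtilde (by omega : 3 ≤ n)
  rw [← hw] at heq
  simp at heq

theorem not_replicate_infix_of_mem_pieces (hn : 4 ≤ n) (hL : ∀ x ∈ L, x.length = n - 1)
    (hP : P ∈ pieces n L) (c : Bool) : ¬ replicate n c <:+: P := by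
  rcases mem_pieces hn hL hP with
    ⟨-, rfl⟩ | ⟨-, x, hx, rfl⟩ | ⟨-, rfl⟩ | ⟨-, rfl⟩ | ⟨-, x, hx, rfl⟩
  · exact not_replicate_infix_wtilde_append hn c
  · exact not_replicate_infix_padded hn hx c false true
  · exact not_infix_of_length_lt (by simp; omega)
  · exact not_infix_of_length_lt (by simp [length_wtilde (by omega : 2 ≤ n)]; omega)
  · exact not_replicate_infix_block_of_odd hn hx c

theorem not_true_cons_wtilde_infix_of_mem_pieces (hn : 4 ≤ n) (hL : ∀ x ∈ L, x.length = n - 1)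
    (hP : P ∈ pieces n L) : ¬ (true :: wtilde n) <:+: P := by
  have hlen := length_true_cons_wtilde (by omega : 2 ≤ n)
  have hlast := getLast?_true_cons_wtilde (by omega : 3 ≤ n)
  rcases mem_pieces hn hL hP with ⟨hpar, rfl⟩ | ⟨hpar, x, hx, rfl⟩ | ⟨-, rfl⟩ | ⟨-, rfl⟩ |
    ⟨hpar, x, hx, rfl⟩
  · exact not_true_cons_wtilde_infix_wtilde_append hn hpar
  · exact not_infix_block_of_even hn hx hlen rfl (by simp [hlast, hpar])
  · exact not_infix_of_length_lt (by rw [hlen]; simp; omega)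
  · exact not_infix_of_length_lt (by simp)
  · exact not_infix_block_of_odd hn hx hlen rfl (by simp [hlast, hpar])
      (isChain_true_cons_wtilde n)

theorem prefix_of_mem_tail_pieces (hP : P ∈ (pieces n L).tail) : [false, false] <+: P := by
  unfold pieces at hP
  split_ifs at hP
  · simp only [tail_cons, mem_append, mem_map, mem_singleton] at hP
    rcases hP with ⟨x, -, rfl⟩ | rfl <;> simp
  · obtain ⟨x, -, rfl⟩ := mem_map.mp hP
    simp

theorem suffix_of_mem_pieces (hn : 4 ≤ n) (hL : ∀ x ∈ L, x.length = n - 1)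
    (hP : P ∈ pieces n L) :
    [true, true] <:+ P ∨ [false, false, true] <:+ P ∨ (n % 2 = 1 ∧ P = wtilde n) := by
  rcases mem_pieces hn hL hP with ⟨hpar, rfl⟩ | ⟨-, x, -, rfl⟩ | ⟨-, rfl⟩ | h | ⟨-, x, -, rfl⟩
  · obtain ⟨w, hw⟩ := getLast?_eq_some_iff.mp (getLast?_wtilde (by omega : 3 ≤ n))
    refine .inr (.inl ⟨w, ?_⟩)
    simp [hw, hpar]
  · rw [append_assoc]
    exact .inl ((suffix_append_sufPad _ x).trans (suffix_append _ _))
  · exact .inr (.inl suffix_rfl)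
  · exact .inr (.inr h)
  · obtain ⟨u, hu⟩ := suffix_append_sufPad [false, false] x
    exact .inr (.inl ⟨prePad [false, false] x ++ u, by simp [← hu]⟩)

end Pieces

section Wbar

variable {n : ℕ} {L : List (List Bool)}

theorem not_replicate_infix_wbar (hn : 4 ≤ n) (hL : ∀ x ∈ L, x.length = n - 1) (c : Bool) :
    ¬ replicate n c <:+: wbar n L := by
  rw [wbar_eq_flatten_pieces]
  refine not_infix_flatten (by simp; omega)
    (fun P hP => not_replicate_infix_of_mem_pieces hn hL hP c)
    (fun P => prefix_of_mem_tail_pieces) fun P hP R hR hS => ?_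
  obtain ⟨i, hi, hin, hPi, hRi⟩ := hS.replicate
  have hc : c = false := by
    simpa using eq_of_prefix_of_prefix
      ((replicate_prefix_replicate (m := 1) c (by omega)).trans hRi)
      ((show [false] <+: [false, false] from ⟨[false], rfl⟩).trans hR) (by simp)
  have hlast : [true] <:+ P := by
    rcases suffix_of_mem_pieces hn hL hP with h | h | ⟨hpar, rfl⟩
    · exact (suffix_cons _ _).trans h
    · exact (suffix_append [false, false] _).trans h
    · obtain ⟨w, hw⟩ := getLast?_eq_some_iff.mp (getLast?_wtilde (by omega : 3 ≤ n))
      exact ⟨w, by simp [hw, hpar]⟩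
  simpa [hc] using eq_of_suffix_of_suffix
    ((replicate_suffix_replicate (m := 1) c (by omega)).trans hPi) hlast (by simp)

theorem not_true_cons_wtilde_infix_wbar (hn : 4 ≤ n) (hL : ∀ x ∈ L, x.length = n - 1) :
    ¬ (true :: wtilde n) <:+: wbar n L := by
  rw [wbar_eq_flatten_pieces]
  refine not_infix_flatten (cons_ne_nil _ _)
    (fun P hP => not_true_cons_wtilde_infix_of_mem_pieces hn hL hP)
    (fun P => prefix_of_mem_tail_pieces) fun P hP R hR hS => ?_
  obtain ⟨R, rfl⟩ := hR
  obtain ⟨p, hp, hpP⟩ := hS.exists_eq_append_singleton (isChain_true_cons_wtilde n)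
  have hlen : p.length = n - 1 := by
    have := congrArg length hp; simp [length_wtilde (by omega : 2 ≤ n)] at this; omega
  have hchain : p.IsChain (· ≠ ·) :=
    (isChain_true_cons_wtilde n).infix (hp ▸ infix_append [] p _)
  rcases suffix_of_mem_pieces hn hL hP with h | h | ⟨hpar, -⟩
  · exact not_suffix_of_isChain hchain h (by simp) (by simp; omega) hpP
  · exact not_suffix_of_isChain hchain h (by simp) (by simp; omega) hpP
  · have := getLast?_true_cons_wtilde (by omega : 3 ≤ n)
    simp [hp, hpar] at this

theorem prefix_wbar (n : ℕ) (L : List (List Bool)) : wtilde n <+: wbar n L := by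
  unfold wbar; split_ifs <;> simp [append_assoc]

theorem suffix_wbar (hL : L ≠ []) : [false, false, true] <:+ wbar n L := by
  unfold wbar
  split_ifs
  · exact suffix_append _ _
  · obtain ⟨L, x, rfl⟩ := L.eq_nil_or_concat.resolve_left hL
    simp only [concat_eq_append, map_append, flatten_append, map_singleton, flatten_singleton]
    exact ((suffix_append _ _).trans (suffix_append _ _)).trans (suffix_append _ _)

theorem infix_wbar_of_mem (hn : 4 ≤ n) {x : List Bool} (hx : x.length = n - 1) (hxL : x ∈ L) :
    x <:+: wbar n L := by
  rw [wbar_eq_flatten_pieces]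
  unfold pieces
  split_ifs with hpar
  · refine IsInfix.trans ?_ (infix_of_mem_flatten (mem_cons_of_mem _ (mem_append_left _
      (mem_map_of_mem (f := fun x => [false, false] ++ wprime n x ++ [true, true]) hxL))))
    rw [block_eq_of_even hpar]
    exact infix_append _ _ _
  · refine IsInfix.trans ?_ (infix_of_mem_flatten (mem_cons_of_mem _
      (mem_map_of_mem (f := fun x => [false, false] ++ wprime n x ++ [false, false, true]) hxL)))
    rw [block_eq_of_odd (by omega) (by omega), append_assoc]
    exact infix_append _ _ _

end Wbar

theorem not_replicate_infix_append_singleton_append {W : List Bool} {n : ℕ} {c : Bool}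
    (hn : 3 ≤ n) (hW : ¬ replicate n c <:+: W) (hpre : [false, true] <+: W)
    (hsuf : [false, true] <:+ W) (d : Bool) : ¬ replicate n c <:+: W ++ [d] ++ W := by
  have hcc_pre : ¬ [c, c] <+: W := fun h => by
    have := eq_of_prefix_of_prefix h hpre rfl; cases c <;> simp at this
  have hcc_suf : ¬ [c, c] <:+ W := fun h => by
    have := eq_of_suffix_of_suffix h hsuf rfl; cases c <;> simp at this
  rw [append_assoc, singleton_append]
  intro h
  rcases h.append_cases with h | h | h
  · exact hW h
  · rcases infix_cons_iff.mp h with h | h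
    · rw [show n = (n - 1) + 1 by omega, replicate_succ, cons_prefix_cons] at h
      exact hcc_pre ((replicate_prefix_replicate c (by omega : 2 ≤ n - 1)).trans h.2)
    · exact hW h
  · obtain ⟨i, hi, hin, hWi, hRi⟩ := h.replicate
    rcases (by omega : i = 1 ∨ 2 ≤ i) with rfl | hi2
    · rw [show n - 1 = (n - 2) + 1 by omega, replicate_succ, cons_prefix_cons] at hRi
      have hc₁ : [c] = [true] := eq_of_suffix_of_suffix hWi ((suffix_cons _ _).trans hsuf) rfl
      have hc₂ : [c] = [false] :=
        eq_of_prefix_of_prefix ((replicate_prefix_replicate (m := 1) c (by omega)).trans hRi.2)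
          ((show [false] <+: [false, true] from ⟨[true], rfl⟩).trans hpre) rfl
      simp [hc₁] at hc₂
    · exact hcc_suf ((replicate_suffix_replicate c hi2).trans hWi)

theorem not_infix_append_false_append {W f : List Bool} (hW : ¬ f <:+: W)
    (hf : f.IsChain (· ≠ ·)) (hhead : f.head? = some true) (hlen : 4 ≤ f.length)
    (hpre : [false] <+: W) (hsuf : [false, false, true] <:+ W) : ¬ f <:+: W ++ [false] ++ W := by
  rw [append_assoc, singleton_append]
  intro h
  rcases h.append_cases with h | h | h
  · exact hW h
  · rcases infix_cons_iff.mp h with h | h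
    · obtain _ | ⟨e, f⟩ := f
      · simp at hhead
      · obtain rfl : e = true := Option.some.inj hhead
        simp at h
    · exact hW h
  · obtain ⟨W', rfl⟩ := hpre
    obtain ⟨p, rfl, hp⟩ := h.exists_eq_append_singleton hf
    exact not_suffix_of_isChain (hf.infix (infix_append [] p _)) hsuf (by simp)
      (by simp at hlen ⊢; omega) hp

/-- For `n ≥ 4`, the word `w̄` contains every word of length `n-1` as a factor,
neither `u = w̄aw̄` nor `v = w̄bw̄` contains `aⁿ` or `bⁿ` as a factor, and
`w = aw̃` is a factor of `u` but not of `v`. -/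
theorem stmt8 (n : ℕ) (hn : 4 ≤ n) (L : List (List Bool))
    (hL : ∀ x : List Bool, x ∈ L ↔ x.length = n - 1) :
    (∀ x : List Bool, x.length = n - 1 → x <:+: wbar n L) ∧
    ¬ List.replicate n true <:+: (wbar n L ++ [true] ++ wbar n L) ∧
    ¬ List.replicate n false <:+: (wbar n L ++ [true] ++ wbar n L) ∧
    ¬ List.replicate n true <:+: (wbar n L ++ [false] ++ wbar n L) ∧
    ¬ List.replicate n false <:+: (wbar n L ++ [false] ++ wbar n L) ∧
    (true :: wtilde n) <:+: (wbar n L ++ [true] ++ wbar n L) ∧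
    ¬ (true :: wtilde n) <:+: (wbar n L ++ [false] ++ wbar n L) := by
  have hLlen : ∀ x ∈ L, x.length = n - 1 := fun x => (hL x).mp
  have hpre : [false, true] <+: wbar n L := (prefix_wtilde (by omega)).trans (prefix_wbar n L)
  have hsuf : [false, false, true] <:+ wbar n L :=
    suffix_wbar (ne_nil_of_mem ((hL (replicate (n - 1) true)).mpr length_replicate))
  have hruns (c d : Bool) : ¬ replicate n c <:+: wbar n L ++ [d] ++ wbar n L :=
    not_replicate_infix_append_singleton_append (by omega) (not_replicate_infix_wbar hn hLlen c)
      hpre ((suffix_cons _ _).trans hsuf) d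
  obtain ⟨r, hr⟩ := prefix_wbar n L
  refine ⟨fun x hx => infix_wbar_of_mem hn hx ((hL x).mpr hx), hruns _ _, hruns _ _, hruns _ _,
    hruns _ _, ⟨wbar n L, r, by rw [← hr]; simp⟩, ?_⟩
  exact not_infix_append_false_append (not_true_cons_wtilde_infix_wbar hn hLlen)
    (isChain_true_cons_wtilde n) rfl (by rw [length_true_cons_wtilde (by omega)]; omega)
    (IsPrefix.trans ⟨[true], rfl⟩ hpre) hsuf
end

section
/- A matrix A in M_n(T) is invertible (has a two-sided multiplicative inverse in the tropical matrix semigroup) if and only if there exists a permutation σ of {1,…,n} such that A_{ij} ≠ -∞ exactly when j = σ(i) (i.e., A is a generalized permutation matrix). -/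
/-- Invertibility in the monoid `M_n(𝕋)` of tropical matrices. -/
def TInv {ι : Type*} [Fintype ι] [DecidableEq ι] (A : Matrix ι ι Trop) : Prop :=
  ∃ A' : Matrix ι ι Trop, tmul A A' = tId ι ∧ tmul A' A = tId ι

/-- A tropical matrix is invertible iff it is a generalized permutation matrix:
`A i j ≠ -∞` exactly when `j = σ i` for some permutation `σ`. -/
theorem stmt9 (n : ℕ) (A : Matrix (Fin n) (Fin n) Trop) :
    TInv A ↔ ∃ σ : Equiv.Perm (Fin n), ∀ i j : Fin n, A i j ≠ ⊥ ↔ j = σ i := by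
  constructor
  · rintro ⟨B, hAB, hBA⟩
    -- diagonal entries of AB give nonbot pairs
    have hdiagAB : ∀ i : Fin n, (Finset.univ.sup fun k => A i k + B k i) = 0 := by
      intro i
      have := congrFun (congrFun hAB i) i
      simpa [tmul, tId] using this
    have hdiagBA : ∀ k : Fin n, (Finset.univ.sup fun m => B k m + A m k) = 0 := by
      intro k
      have := congrFun (congrFun hBA k) k
      simpa [tmul, tId] using this
    have hoffAB : ∀ i j k : Fin n, i ≠ j → A i k + B k j = ⊥ := by
      intro i j k hij
      have h : (Finset.univ.sup fun k => A i k + B k j) = ⊥ := by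
        have := congrFun (congrFun hAB i) j
        simpa [tmul, tId, hij] using this
      have := Finset.le_sup (f := fun k => A i k + B k j) (Finset.mem_univ k)
      rw [h] at this
      exact le_bot_iff.mp this
    have hoffBA : ∀ k l m : Fin n, k ≠ l → B k m + A m l = ⊥ := by
      intro k l m hkl
      have h : (Finset.univ.sup fun m => B k m + A m l) = ⊥ := by
        have := congrFun (congrFun hBA k) l
        simpa [tmul, tId, hkl] using this
      have := Finset.le_sup (f := fun m => B k m + A m l) (Finset.mem_univ m)
      rw [h] at this
      exact le_bot_iff.mp this
    have hd : ∀ i : Fin n, ∃ k, A i k ≠ ⊥ ∧ B k i ≠ ⊥ := by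
      intro i
      by_contra hc
      push_neg at hc
      have : (Finset.univ.sup fun k => A i k + B k i) = ⊥ := by
        apply le_bot_iff.mp
        apply Finset.sup_le
        intro k _
        rcases eq_or_ne (A i k) ⊥ with h | h
        · simp [h]
        · simp [hc k h]
      rw [hdiagAB i] at this
      exact (by simp : (0 : Trop) ≠ ⊥) this
    have hd' : ∀ k : Fin n, ∃ m, B k m ≠ ⊥ ∧ A m k ≠ ⊥ := by
      intro k
      by_contra hc
      push_neg at hc
      have : (Finset.univ.sup fun m => B k m + A m k) = ⊥ := by
        apply le_bot_iff.mp
        apply Finset.sup_le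
        intro m _
        rcases eq_or_ne (B k m) ⊥ with h | h
        · simp [h]
        · simp [hc m h]
      rw [hdiagBA k] at this
      exact (by simp : (0 : Trop) ≠ ⊥) this
    have fact2 : ∀ i j k : Fin n, A i k ≠ ⊥ → B k j ≠ ⊥ → i = j := by
      intro i j k h1 h2
      by_contra hij
      have := hoffAB i j k hij
      rw [WithBot.add_eq_bot] at this
      tauto
    have fact3 : ∀ k l m : Fin n, B k m ≠ ⊥ → A m l ≠ ⊥ → k = l := by
      intro k l m h1 h2
      by_contra hkl
      have := hoffBA k l m hkl
      rw [WithBot.add_eq_bot] at this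
      tauto
    choose σ hσ1 hσ2 using hd
    have huniq : ∀ i k : Fin n, A i k ≠ ⊥ → k = σ i := by
      intro i k hik
      obtain ⟨m, hBkm, hAmk⟩ := hd' k
      have hmi : i = m := fact2 i m k hik hBkm
      subst hmi
      exact fact3 k (σ i) i hBkm (hσ1 i)
    have hinj : Function.Injective σ := by
      intro i i' h
      have : A i' (σ i) ≠ ⊥ := h ▸ hσ1 i'
      exact (fact2 i' i (σ i) this (hσ2 i)).symm ▸ rfl
    refine ⟨Equiv.ofBijective σ (Finite.injective_iff_bijective.mp hinj), ?_⟩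
    intro i j
    constructor
    · intro h
      simpa [Equiv.ofBijective_apply] using huniq i j h
    · intro h
      simp only [Equiv.ofBijective_apply] at h
      exact h ▸ hσ1 i
  · rintro ⟨σ, hσ⟩
    choose r hr using fun i => WithBot.ne_bot_iff_exists.mp ((hσ i (σ i)).mpr rfl)
    refine ⟨fun k j => if k = σ j then ((-(r j) : ℝ) : Trop) else ⊥, ?_, ?_⟩
    · funext i j
      show (Finset.univ.sup fun k => A i k + if k = σ j then ((-(r j) : ℝ) : Trop) else ⊥)
          = tId (Fin n) i j
      rcases eq_or_ne i j with rfl | hij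
      · apply le_antisymm
        · apply Finset.sup_le
          intro k _
          rcases eq_or_ne k (σ i) with rfl | hk
          · simp [tId, ← hr i, ← WithBot.coe_add]
          · simp [tId, hk]
        · have := Finset.le_sup
            (f := fun k => A i k + if k = σ i then ((-(r i) : ℝ) : Trop) else ⊥)
            (Finset.mem_univ (σ i))
          simpa [tId, ← hr i, ← WithBot.coe_add] using this
      · have hall : ∀ k : Fin n,
            (A i k + if k = σ j then ((-(r j) : ℝ) : Trop) else ⊥) = ⊥ := by
          intro k
          rcases eq_or_ne k (σ j) with rfl | hk
          · have : A i (σ j) = ⊥ := by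
              by_contra h
              exact hij ((σ.injective ((hσ i (σ j)).mp h)).symm)
            simp [this]
          · simp [hk]
        apply le_antisymm
        · apply Finset.sup_le
          intro k _
          rw [hall k]
          simp [tId, hij]
        · simp [tId, hij]
    · funext k l
      show (Finset.univ.sup fun m => (if k = σ m then ((-(r m) : ℝ) : Trop) else ⊥) + A m l)
          = tId (Fin n) k l
      rcases eq_or_ne k l with rfl | hkl
      · apply le_antisymm
        · apply Finset.sup_le
          intro m _
          rcases eq_or_ne k (σ m) with hk | hk
          · rcases eq_or_ne (A m k) ⊥ with hb | hb
            · simp [hb]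
            · have : k = σ m := (hσ m k).mp hb
              subst hk
              have hml : m = σ.symm (σ m) := (σ.symm_apply_apply m).symm
              simp [tId, ← hr m, ← WithBot.coe_add,
                (hr m).symm]
          · simp [hk]
        · have := Finset.le_sup
            (f := fun m => (if k = σ m then ((-(r m) : ℝ) : Trop) else ⊥) + A m k)
            (Finset.mem_univ (σ.symm k))
          have hk : k = σ (σ.symm k) := (σ.apply_symm_apply k).symm
          have hA : A (σ.symm k) k = ((r (σ.symm k) : ℝ) : Trop) := by
            have := (hr (σ.symm k)).symm; rwa [← hk] at this
          simpa [tId, ← hk, hA, ← WithBot.coe_add] using this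
      · have hall : ∀ m : Fin n,
            ((if k = σ m then ((-(r m) : ℝ) : Trop) else ⊥) + A m l) = ⊥ := by
          intro m
          rcases eq_or_ne k (σ m) with hk | hk
          · have : A m l = ⊥ := by
              by_contra h
              exact hkl (hk.trans ((hσ m l).mp h).symm)
            simp [this]
          · simp [hk]
        apply le_antisymm
        · apply Finset.sup_le
          intro m _
          rw [hall m]
          simp [tId, hkl]
        · simp [tId, hkl]
end

section
/- For each 3 ≤ k ≤ n let q_k = r_k be an identity (over {a,b}) satisfied by UT_k(T), and let t_k ≥ (k-1)² + 1 be integers. Set A_n = a, B_n = b, and recursively A_{k-1} = (q_k r_k)^{t_k}[A_k^{\bar k}, B_k^{\bar k}], B_{k-1} = (q_k r_k)^{t_k} r_k[A_k^{\bar k}, B_k^{\bar k}], where \bar k = lcm{1,…,k} and s[x,y] denotes substitution of words x for a and y for b in s. Then for any identity u₂ = v₂ satisfied by M_2(T), the identity u₂[A₂,B₂]A₂A₃⋯A_{n-1} = v₂[A₂,B₂]A₂A₃⋯A_{n-1} is satisfied by M_n(T). (One may assume as given the theorem of Izhakian–Merlet: if u = v holds in M_{k-1}(T), q = r holds in UT_k(T),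 and t ≥ (k-1)²+1, then (ua, va)[(qr)^t[a^{\bar k}, b^{\bar k}], (qr)^t r[a^{\bar k}, b^{\bar k}]] holds in M_k(T).) -/
/-- `k̄ = lcm {1, …, k}`. -/
def barK (k : ℕ) : ℕ := (Finset.Icc 1 k).lcm id


lemma subst_append (w1 w2 x y : List Bool) :
    subst (w1 ++ w2) x y = subst w1 x y ++ subst w2 x y := by
  simp [subst]

lemma subst_cons (c : Bool) (w x y : List Bool) :
    subst (c :: w) x y = (if c then x else y) ++ subst w x y := by
  simp [subst]

lemma subst_single_true (x y : List Bool) : subst [true] x y = x := by simp [subst]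

lemma subst_single_false (x y : List Bool) : subst [false] x y = y := by simp [subst]

lemma subst_id (w : List Bool) : subst w [true] [false] = w := by
  induction w with
  | nil => simp [subst]
  | cons c w ih => cases c <;> simp [subst_cons, ih]

lemma subst_subst (w x y X Y : List Bool) :
    subst (subst w x y) X Y = subst w (subst x X Y) (subst y X Y) := by
  induction w with
  | nil => simp [subst]
  | cons c w ih =>
    cases c <;> simp [subst_cons, subst_append, ih]

lemma subst_repW (w : List Bool) (k : ℕ) (x y : List Bool) :
    subst (repW w k) x y = repW (subst w x y) k := by
  induction k with
  | zero => simp [repW, subst]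
  | succ m ih =>
    simp [repW, List.replicate_succ] at *
    simp [subst_append, ih]

lemma subst_repW_true (m : ℕ) (x y : List Bool) :
    subst (repW [true] m) x y = repW x m := by
  rw [subst_repW, subst_single_true]

lemma subst_repW_false (m : ℕ) (x y : List Bool) :
    subst (repW [false] m) x y = repW y m := by
  rw [subst_repW, subst_single_false]

/-- Lemma on iterated application of the Izhakian–Merlet construction:
given identities `q_k = r_k` of `UT_k(𝕋)` and `t_k ≥ (k-1)² + 1` for `3 ≤ k ≤ n`,
the recursively defined words `A_k, B_k` turn any identity `u₂ = v₂` of `M_2(𝕋)`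
into the identity `u₂[A₂,B₂]A₂A₃⋯A_{n-1} = v₂[A₂,B₂]A₂A₃⋯A_{n-1}` of `M_n(𝕋)`.
The Izhakian–Merlet theorem is assumed as the hypothesis `hIM`. -/
theorem stmt14 (n : ℕ) (hn : 3 ≤ n)
    (q r : ℕ → List Bool) (t : ℕ → ℕ)
    (ht : ∀ k, 3 ≤ k → k ≤ n → (k - 1) ^ 2 + 1 ≤ t k)
    (hqr : ∀ k, 3 ≤ k → k ≤ n → ∀ X Y : Matrix (Fin k) (Fin k) Trop,
      IsUT X → IsUT Y → evalWord (q k) X Y = evalWord (r k) X Y)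
    (A B : ℕ → List Bool) (hAn : A n = [true]) (hBn : B n = [false])
    (hArec : ∀ k, 3 ≤ k → k ≤ n →
      A (k - 1) = subst (repW (q k ++ r k) (t k))
        (repW (A k) (barK k)) (repW (B k) (barK k)))
    (hBrec : ∀ k, 3 ≤ k → k ≤ n →
      B (k - 1) = subst (repW (q k ++ r k) (t k) ++ r k)
        (repW (A k) (barK k)) (repW (B k) (barK k)))
    (hIM : ∀ k, 3 ≤ k → k ≤ n → ∀ u v q' r' : List Bool, ∀ t' : ℕ,
      (k - 1) ^ 2 + 1 ≤ t' →
      (∀ X Y : Matrix (Fin (k - 1)) (Fin (k - 1)) Trop,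
        evalWord u X Y = evalWord v X Y) →
      (∀ X Y : Matrix (Fin k) (Fin k) Trop, IsUT X → IsUT Y →
        evalWord q' X Y = evalWord r' X Y) →
      ∀ X Y : Matrix (Fin k) (Fin k) Trop,
        evalWord (subst (u ++ [true])
            (subst (repW (q' ++ r') t') (repW [true] (barK k)) (repW [false] (barK k)))
            (subst (repW (q' ++ r') t' ++ r') (repW [true] (barK k))
              (repW [false] (barK k)))) X Y =
        evalWord (subst (v ++ [true])
            (subst (repW (q' ++ r') t') (repW [true] (barK k)) (repW [false] (barK k)))
            (subst (repW (q' ++ r') t' ++ r') (repW [true] (barK k))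
              (repW [false] (barK k)))) X Y)
    (u2 v2 : List Bool)
    (h2 : ∀ X Y : Matrix (Fin 2) (Fin 2) Trop, evalWord u2 X Y = evalWord v2 X Y) :
    ∀ X Y : Matrix (Fin n) (Fin n) Trop,
      evalWord (subst u2 (A 2) (B 2) ++
        ((List.range (n - 2)).map fun i => A (i + 2)).flatten) X Y =
      evalWord (subst v2 (A 2) (B 2) ++
        ((List.range (n - 2)).map fun i => A (i + 2)).flatten) X Y := by
  have key : ∀ k, 2 ≤ k → k ≤ n → ∃ Tu Tv : List Bool,
      (subst u2 (A 2) (B 2) ++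
          ((List.range (k - 2)).map fun i => A (i + 2)).flatten = subst Tu (A k) (B k)) ∧
      (subst v2 (A 2) (B 2) ++
          ((List.range (k - 2)).map fun i => A (i + 2)).flatten = subst Tv (A k) (B k)) ∧
      (∀ X Y : Matrix (Fin k) (Fin k) Trop, evalWord Tu X Y = evalWord Tv X Y) := by
    intro k hk
    induction k, hk using Nat.le_induction with
    | base =>
      intro _
      refine ⟨u2, v2, ?_, ?_, h2⟩ <;> simp [subst_subst, subst_id]
    | succ k hk2 ih =>
      intro hkn
      obtain ⟨Tu, Tv, hu, hv, hid⟩ := ih (by omega)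
      have h3 : 3 ≤ k + 1 := by omega
      set P : List Bool := subst (repW (q (k+1) ++ r (k+1)) (t (k+1)))
        (repW [true] (barK (k+1))) (repW [false] (barK (k+1))) with hP
      set Q : List Bool := subst (repW (q (k+1) ++ r (k+1)) (t (k+1)) ++ r (k+1))
        (repW [true] (barK (k+1))) (repW [false] (barK (k+1))) with hQ
      have hA : subst P (A (k+1)) (B (k+1)) = A k := by
        rw [hP, subst_subst, subst_repW_true, subst_repW_false]
        have := hArec (k+1) h3 hkn
        simpa using this.symm
      have hB : subst Q (A (k+1)) (B (k+1)) = B k := by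
        rw [hQ, subst_subst, subst_repW_true, subst_repW_false]
        have := hBrec (k+1) h3 hkn
        simpa using this.symm
      have hrange : List.range (k + 1 - 2) = List.range (k - 2) ++ [k - 2] := by
        have : k + 1 - 2 = (k - 2) + 1 := by omega
        rw [this, List.range_succ]
      have hAk : A (k - 2 + 2) = A k := by
        congr 1; omega
      refine ⟨subst (Tu ++ [true]) P Q, subst (Tv ++ [true]) P Q, ?_, ?_, ?_⟩
      · rw [subst_subst, hA, hB, subst_append, subst_single_true, ← hu, hrange]
        simp [hAk, List.append_assoc]
      · rw [subst_subst, hA, hB, subst_append, subst_single_true, ← hv, hrange]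
        simp [hAk, List.append_assoc]
      · exact hIM (k+1) h3 hkn Tu Tv (q (k+1)) (r (k+1)) (t (k+1))
          (ht (k+1) h3 hkn) hid (hqr (k+1) h3 hkn)
  obtain ⟨Tu, Tv, hu, hv, hid⟩ := key n (by omega) le_rfl
  intro X Y
  rw [hu, hv, hAn, hBn, subst_id, subst_id]
  exact hid X Y
end
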